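/- arXiv:0801.0046 — 2 statements merged into one kernel-verified Lean document; each statement's English description precedes it below -/
import Mathlib

section
/- The rotation number of a regular closed curve in ℝ² is invariant under regular homotopy: if γ̄₀ and γ̄₁ are regularly homotopic regular closed curves, then rot(γ̄₀) = rot(γ̄₁). -/
/-!
A rotation number is the total increment of a continuous angle of the unit tangent, a loop in
the unit circle. This increment depends only on the loop, since two angles of it differ by a
continuous function with values in `2πℤ`. By uniform continuity on `[0, 2π] × [0, 1]`, the unit
tangents of `Γ t` and `Γ t'` are never antipodal when `t` and `t'` are close, so an angle of one
becomes an angle of the other after adding the principal argument of their quotient, which is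
continuous and periodic. Connectedness of `[0, 1]` carries the increment from `t = 0` to `t = 1`.
-/

open Real

noncomputable section

/-- A regular closed curve in the plane: continuously differentiable,
`2π`-periodic, with nowhere vanishing derivative. -/
def IsRegularClosedCurve (γ : ℝ → ℝ × ℝ) : Prop :=
  ContDiff ℝ 1 γ ∧ (∀ s, γ (s + 2 * π) = γ s) ∧ ∀ s, deriv γ s ≠ 0

/-- `γ` has rotation number `n`: there is a continuous angle function `θ` for the
velocity vector with `θ (2π) - θ 0 = 2πn`. -/
def HasRotationNumber (γ : ℝ → ℝ × ℝ) (n : ℤ) : Prop :=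
  ∃ θ : ℝ → ℝ, Continuous θ ∧
    (∀ s, deriv γ s = ‖deriv γ s‖ • (Real.cos (θ s), Real.sin (θ s))) ∧
    θ (2 * π) - θ 0 = 2 * π * (n : ℝ)

/-- A regular homotopy: a family of regular closed curves, jointly continuous
in `(s, t)` together with its `s`-derivative, for `t ∈ [0,1]`. -/
def IsRegularHomotopy (Γ : ℝ → ℝ → ℝ × ℝ) : Prop :=
  (∀ t ∈ Set.Icc (0:ℝ) 1, IsRegularClosedCurve (Γ t)) ∧
  ContinuousOn (fun p : ℝ × ℝ => Γ p.2 p.1) (Set.univ ×ˢ Set.Icc (0:ℝ) 1) ∧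
  ContinuousOn (fun p : ℝ × ℝ => deriv (Γ p.2) p.1) (Set.univ ×ˢ Set.Icc (0:ℝ) 1)

def RegularlyHomotopic (γ₀ γ₁ : ℝ → ℝ × ℝ) : Prop :=
  ∃ Γ : ℝ → ℝ → ℝ × ℝ, IsRegularHomotopy Γ ∧ Γ 0 = γ₀ ∧ Γ 1 = γ₁

/-- The coordinate functions of a space curve `γ = (x, y, z) : ℝ → ℝ³`. -/
def curveX (γ : ℝ → ℝ × ℝ × ℝ) : ℝ → ℝ := fun s => (γ s).1
def curveY (γ : ℝ → ℝ × ℝ × ℝ) : ℝ → ℝ := fun s => (γ s).2.1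
def curveZ (γ : ℝ → ℝ × ℝ × ℝ) : ℝ → ℝ := fun s => (γ s).2.2

/-- The Legendrian condition `z' + x·y' ≡ 0` for the standard contact
structure `ξ = ker (dz + x dy)` on `ℝ³`. -/
def IsLegendrian (γ : ℝ → ℝ × ℝ × ℝ) : Prop :=
  ∀ s, deriv (curveZ γ) s + curveX γ s * deriv (curveY γ) s = 0

/-- A regular closed Legendrian curve in `(ℝ³, ξ)`. -/
def IsRegularClosedLegendrian (γ : ℝ → ℝ × ℝ × ℝ) : Prop :=
  ContDiff ℝ 1 γ ∧ (∀ s, γ (s + 2 * π) = γ s) ∧ (∀ s, deriv γ s ≠ 0) ∧ IsLegendrian γ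

/-- The Lagrangian projection `(x, y, z) ↦ (x, y)`. -/
def LagrangianProj (γ : ℝ → ℝ × ℝ × ℝ) : ℝ → ℝ × ℝ :=
  fun s => ((γ s).1, (γ s).2.1)

/-- The rotation number of a Legendrian curve, measured in the frame
`e₁ = ∂ₓ`, `e₂ = ∂_y - x ∂_z` of `ξ`, in which `γ'` has coefficients `(x', y')`. -/
def HasLegendrianRotationNumber (γ : ℝ → ℝ × ℝ × ℝ) (n : ℤ) : Prop :=
  ∃ θ : ℝ → ℝ, Continuous θ ∧
    (∀ s, (deriv (curveX γ) s, deriv (curveY γ) s) =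
      ‖(deriv (curveX γ) s, deriv (curveY γ) s)‖ • (Real.cos (θ s), Real.sin (θ s))) ∧
    θ (2 * π) - θ 0 = 2 * π * (n : ℝ)

/-- A Legendrian regular homotopy: a family of regular closed Legendrian
curves, jointly continuous in `(s,t)` together with its `s`-derivative. -/
def IsLegendrianRegularHomotopy (Γ : ℝ → ℝ → ℝ × ℝ × ℝ) : Prop :=
  (∀ t ∈ Set.Icc (0:ℝ) 1, IsRegularClosedLegendrian (Γ t)) ∧
  ContinuousOn (fun p : ℝ × ℝ => Γ p.2 p.1) (Set.univ ×ˢ Set.Icc (0:ℝ) 1) ∧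
  ContinuousOn (fun p : ℝ × ℝ => deriv (Γ p.2) p.1) (Set.univ ×ˢ Set.Icc (0:ℝ) 1)

def LegendrianRegularlyHomotopic (γ₀ γ₁ : ℝ → ℝ × ℝ × ℝ) : Prop :=
  ∃ Γ : ℝ → ℝ → ℝ × ℝ × ℝ, IsLegendrianRegularHomotopy Γ ∧ Γ 0 = γ₀ ∧ Γ 1 = γ₁

open Complex Set

theorem div_mem_slitPlane_of_norm_sub_lt_two {z w : ℂ} (hz : ‖z‖ = 1) (hw : ‖w‖ = 1)
    (h : ‖z - w‖ < 2) : z / w ∈ slitPlane := by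
  have hw0 : w ≠ 0 := norm_ne_zero_iff.mp (by rw [hw]; exact one_ne_zero)
  have hsphere : {z / w} ⊆ Metric.sphere (0 : ℂ) 1 := by simp [hz, hw]
  rw [← singleton_subset_iff, subset_slitPlane_iff_of_subset_sphere hsphere, mem_singleton_iff]
  intro hq
  have hzw : z = -w := by
    rw [eq_div_iff hw0] at hq
    push_cast at hq
    linear_combination -hq
  rw [hzw, show -w - w = -2 * w by ring, norm_mul, hw] at h
  norm_num at h

def HasAngleIncrement (u : ℝ → ℂ) (a b r : ℝ) : Prop :=
  ∃ θ : ℝ → ℝ, ContinuousOn θ (Icc a b) ∧ (∀ x ∈ Icc a b, exp (θ x * I) = u x) ∧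
    θ b - θ a = r

namespace HasAngleIncrement

variable {u v : ℝ → ℂ} {a b r : ℝ}

theorem unique {r' : ℝ} (h : HasAngleIncrement u a b r) (h' : HasAngleIncrement u a b r')
    (hab : a ≤ b) : r = r' := by
  obtain ⟨θ, hθc, hθ, rfl⟩ := h
  obtain ⟨φ, hφc, hφ, rfl⟩ := h'
  have hmaps : MapsTo (θ - φ) (Icc a b) (AddSubgroup.zmultiples (2 * π)) := by
    intro x hx
    obtain ⟨n, hn⟩ := exp_eq_exp_iff_exists_int.mp ((hθ x hx).trans (hφ x hx).symm)
    refine ⟨n, ?_⟩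
    have hI : ((θ x - φ x : ℝ) : ℂ) * I = (n * (2 * π) : ℝ) * I := by
      push_cast
      linear_combination hn
    change (n : ℤ) • (2 * π) = θ x - φ x
    rw [zsmul_eq_mul]
    exact_mod_cast (mul_right_cancel₀ I_ne_zero hI).symm
  have := isPreconnected_Icc.constant_of_mapsTo
    (isDiscrete_iff_discreteTopology.mpr
      (inferInstanceAs (DiscreteTopology (AddSubgroup.zmultiples (2 * π))))) (hθc.sub hφc) hmaps
    (right_mem_Icc.2 hab) (left_mem_Icc.2 hab)
  simp only [Pi.sub_apply] at this
  linarith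

theorem of_norm_sub_lt_two (h : HasAngleIncrement u a b r) (hu : u b = u a) (hv : v b = v a)
    (hvc : ContinuousOn v (Icc a b)) (hv1 : ∀ x ∈ Icc a b, ‖v x‖ = 1)
    (hvu : ∀ x ∈ Icc a b, ‖v x - u x‖ < 2) : HasAngleIncrement v a b r := by
  obtain ⟨θ, hθc, hθ, hθr⟩ := h
  have hu1 : ∀ x ∈ Icc a b, ‖u x‖ = 1 := fun x hx => by
    rw [← hθ x hx, norm_exp_ofReal_mul_I]
  have hu0 : ∀ x ∈ Icc a b, u x ≠ 0 := fun x hx =>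
    norm_ne_zero_iff.mp (by rw [hu1 x hx]; exact one_ne_zero)
  have huc : ContinuousOn u (Icc a b) :=
    (continuous_exp.comp_continuousOn
      ((continuous_ofReal.comp_continuousOn hθc).mul continuousOn_const)).congr
      fun x hx => (hθ x hx).symm
  have hslit : ∀ x ∈ Icc a b, v x / u x ∈ slitPlane := fun x hx =>
    div_mem_slitPlane_of_norm_sub_lt_two (hv1 x hx) (hu1 x hx) (hvu x hx)
  have hφc : ContinuousOn (fun x => arg (v x / u x)) (Icc a b) := fun x hx =>
    (continuousAt_arg (hslit x hx)).comp_continuousWithinAt (f := fun x => v x / u x)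
      (hvc.div huc hu0 x hx)
  refine ⟨fun x => θ x + arg (v x / u x), hθc.add hφc, fun x hx => ?_, ?_⟩
  · have harg : exp (arg (v x / u x) * I) = v x / u x := by
      simpa [norm_div, hv1 x hx, hu1 x hx] using norm_mul_exp_arg_mul_I (v x / u x)
    push_cast
    rw [add_mul, Complex.exp_add, hθ x hx, harg, mul_div_cancel₀ _ (hu0 x hx)]
  · simp only [hu, hv]
    linarith

theorem of_homotopy {F : ℝ → ℝ → ℂ}
    (hF : ContinuousOn (fun p : ℝ × ℝ => F p.2 p.1) (Icc a b ×ˢ Icc 0 1))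
    (hF1 : ∀ t ∈ Icc (0 : ℝ) 1, ∀ s ∈ Icc a b, ‖F t s‖ = 1)
    (hper : ∀ t ∈ Icc (0 : ℝ) 1, F t b = F t a)
    (h : HasAngleIncrement (F 0) a b r) : HasAngleIncrement (F 1) a b r := by
  obtain ⟨δ, hδ, hFδ⟩ := Metric.uniformContinuousOn_iff.mp
    ((isCompact_Icc.prod isCompact_Icc).uniformContinuousOn_of_continuous hF) 2 two_pos
  have step : ∀ t ∈ Icc (0 : ℝ) 1, ∀ t' ∈ Icc (0 : ℝ) 1, dist t' t < δ →
      ∀ r, HasAngleIncrement (F t) a b r → HasAngleIncrement (F t') a b r := by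
    intro t ht t' ht' htt' r hr
    refine hr.of_norm_sub_lt_two (hper t ht) (hper t' ht')
      (hF.comp (continuousOn_id.prodMk continuousOn_const) fun s hs => ⟨hs, ht'⟩)
      (hF1 t' ht') fun s hs => ?_
    rw [← dist_eq_norm]
    refine hFδ (s, t') ⟨hs, ht'⟩ (s, t) ⟨hs, ht⟩ ?_
    rwa [Prod.dist_eq, dist_self, max_eq_right dist_nonneg]
  refine isPreconnected_Icc.induction₂'
    (fun t t' => ∀ r, HasAngleIncrement (F t) a b r → HasAngleIncrement (F t') a b r)
    (fun t ht => ?_) (fun _ _ _ _ _ _ h₁ h₂ r hr => h₂ r (h₁ r hr))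
    (left_mem_Icc.2 zero_le_one) (right_mem_Icc.2 zero_le_one) r h
  filter_upwards [self_mem_nhdsWithin, nhdsWithin_le_nhds (Metric.ball_mem_nhds t hδ)]
    with t' ht' htt'
  exact ⟨step t ht t' ht' htt', step t' ht' t ht (by rwa [dist_comm])⟩

end HasAngleIncrement

-- Read in `ℂ`, so that `‖velocity γ s‖` is Euclidean; the norm of `ℝ × ℝ` is the sup norm.
def velocity (γ : ℝ → ℝ × ℝ) (s : ℝ) : ℂ :=
  equivRealProdCLM.symm (deriv γ s)

def unitTangent (γ : ℝ → ℝ × ℝ) (s : ℝ) : ℂ :=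
  velocity γ s / ‖velocity γ s‖

section UnitTangent

variable {γ : ℝ → ℝ × ℝ}

theorem velocity_ne_zero {s : ℝ} (h : deriv γ s ≠ 0) : velocity γ s ≠ 0 :=
  (map_ne_zero_iff _ equivRealProdCLM.symm.injective).mpr h

theorem norm_unitTangent {s : ℝ} (h : deriv γ s ≠ 0) : ‖unitTangent γ s‖ = 1 := by
  rw [unitTangent, norm_div, norm_real, norm_norm,
    div_self (norm_ne_zero_iff.mpr (velocity_ne_zero h))]

theorem IsRegularClosedCurve.unitTangent_two_pi (h : IsRegularClosedCurve γ) :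
    unitTangent γ (2 * π) = unitTangent γ 0 := by
  have hper : (fun s => γ (s + 2 * π)) = γ := funext h.2.1
  have hderiv : deriv γ (2 * π) = deriv γ 0 := by
    simpa [hper] using (deriv_comp_add_const (f := γ) (2 * π) (x := 0)).symm
  simp only [unitTangent, velocity, hderiv]

theorem HasRotationNumber.hasAngleIncrement {n : ℤ} (h : HasRotationNumber γ n)
    (hγ : ∀ s, deriv γ s ≠ 0) : HasAngleIncrement (unitTangent γ) 0 (2 * π) (2 * π * n) := by
  obtain ⟨θ, hθc, hθ, hθn⟩ := h
  refine ⟨θ, hθc.continuousOn, fun s _ => ?_, hθn⟩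
  have hv : velocity γ s = ‖deriv γ s‖ * exp (θ s * I) := by
    rw [velocity, exp_mul_I]
    conv_lhs => rw [hθ s]
    apply Complex.ext <;> simp [← ofReal_cos, ← ofReal_sin]
  have hnorm : ‖velocity γ s‖ = ‖deriv γ s‖ := by
    rw [hv, norm_mul, norm_real, norm_norm, norm_exp_ofReal_mul_I, mul_one]
  have hd : (‖deriv γ s‖ : ℂ) ≠ 0 := ofReal_ne_zero.mpr (norm_ne_zero_iff.mpr (hγ s))
  rw [unitTangent, hnorm, hv, mul_div_cancel_left₀ _ hd]

end UnitTangent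

theorem IsRegularHomotopy.continuousOn_unitTangent {Γ : ℝ → ℝ → ℝ × ℝ}
    (hΓ : IsRegularHomotopy Γ) :
    ContinuousOn (fun p : ℝ × ℝ => unitTangent (Γ p.2) p.1) (univ ×ˢ Icc 0 1) := by
  have hv : ContinuousOn (fun p : ℝ × ℝ => velocity (Γ p.2) p.1) (univ ×ˢ Icc 0 1) :=
    equivRealProdCLM.symm.continuous.comp_continuousOn hΓ.2.2
  refine hv.div (continuous_ofReal.comp_continuousOn hv.norm) fun p hp => ?_
  exact ofReal_ne_zero.mpr (norm_ne_zero_iff.mpr (velocity_ne_zero ((hΓ.1 p.2 hp.2).2.2 p.1)))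

theorem IsRegularHomotopy.hasAngleIncrement_unitTangent {Γ : ℝ → ℝ → ℝ × ℝ} {r : ℝ}
    (hΓ : IsRegularHomotopy Γ) (h : HasAngleIncrement (unitTangent (Γ 0)) 0 (2 * π) r) :
    HasAngleIncrement (unitTangent (Γ 1)) 0 (2 * π) r :=
  h.of_homotopy (hΓ.continuousOn_unitTangent.mono (prod_mono (subset_univ _) subset_rfl))
    (fun t ht s _ => norm_unitTangent ((hΓ.1 t ht).2.2 s))
    fun t ht => (hΓ.1 t ht).unitTangent_two_pi

theorem rotationNumber_invariant_of_regularlyHomotopic_general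
    (γ₀ γ₁ : ℝ → ℝ × ℝ) (n₀ n₁ : ℤ)
    (hn₀ : HasRotationNumber γ₀ n₀) (hn₁ : HasRotationNumber γ₁ n₁)
    (h : RegularlyHomotopic γ₀ γ₁) :
    n₀ = n₁ := by
  obtain ⟨Γ, hΓ, rfl, rfl⟩ := h
  have hregular : ∀ t ∈ Icc (0 : ℝ) 1, ∀ s, deriv (Γ t) s ≠ 0 := fun t ht => (hΓ.1 t ht).2.2
  have h₀ := hn₀.hasAngleIncrement (hregular 0 (left_mem_Icc.2 zero_le_one))
  have h₁ := hn₁.hasAngleIncrement (hregular 1 (right_mem_Icc.2 zero_le_one))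
  have := (hΓ.hasAngleIncrement_unitTangent h₀).unique h₁ two_pi_pos.le
  exact_mod_cast mul_left_cancel₀ two_pi_pos.ne' this

/-- The rotation number is invariant under regular homotopy. -/
theorem rotationNumber_invariant_of_regularlyHomotopic
    (γ₀ γ₁ : ℝ → ℝ × ℝ) (n₀ n₁ : ℤ)
    (h₀ : IsRegularClosedCurve γ₀) (h₁ : IsRegularClosedCurve γ₁)
    (hn₀ : HasRotationNumber γ₀ n₀) (hn₁ : HasRotationNumber γ₁ n₁)
    (h : RegularlyHomotopic γ₀ γ₁) :
    n₀ = n₁ :=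
  rotationNumber_invariant_of_regularlyHomotopic_general γ₀ γ₁ n₀ n₁ hn₀ hn₁ h
end
end

section
/- Cusp formula for the rotation number (second form): Let γ = (x, y, z) : ℝ → ℝ³ be a twice continuously differentiable regular closed Legendrian curve such that y' has only finitely many zeros s₁, …, s_k in [0, 2π), each nondegenerate (y''(sᵢ) ≠ 0). Then rot(γ) equals the sum, over those zeros sᵢ of y' with x'(sᵢ) < 0, of −sign(y''(sᵢ)). (In the front projection this is the count ρ₋ − λ₊ of downward-oriented right cusps minus upward-oriented left cusps.) -/
/-!
Let `θ` be a continuous angle of the velocity `(x', y')` and count, with `oddPiIndex ∘ θ`, the odd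
multiples of `π` that `θ` has passed. Since `θ (s + 2π) = θ s + 2πn`, this count grows by `n` over a
period. It is locally constant except where `(x', y')` points along `-∂ₓ`, i.e. at the zeros of `y'`
with `x' < 0`. There `θ` crosses an odd multiple of `π`, in the direction read off from the sign
change of `y' = ‖(x', y')‖ sin θ`: the count drops by one when `y'' > 0` and rises by one when
`y'' < 0`.
-/

open Real

noncomputable section

open Filter Topology Set Function

theorem Function.Periodic.deriv {𝕜 F : Type*} [NontriviallyNormedField 𝕜] [NormedAddCommGroup F]
    [NormedSpace 𝕜 F] {f : 𝕜 → F} {c : 𝕜} (h : Periodic f c) : Periodic (deriv f) c := fun x => by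
  rw [← deriv_comp_add_const, h.funext]

theorem exists_Icc_mem_iff_of_periodic {P : ℝ → Prop} {p : ℝ} (hp : 0 < p) (hP : Periodic P p)
    {C : Finset ℝ} (hCsub : ↑C ⊆ Ico 0 p) (hC : ∀ s ∈ Ico 0 p, P s ↔ s ∈ C) :
    ∃ c, ↑C ⊆ Ioo c (c + p) ∧ ∀ x ∈ Icc c (c + p), P x ↔ x ∈ C := by
  have hev : ∀ᶠ c in 𝓝[<] 0, -p < c ∧ ∀ s ∈ C, s - p < c :=
    nhdsWithin_le_nhds <| (eventually_gt_nhds (neg_neg_of_pos hp)).and <|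
      (Finset.eventually_all C).2 fun s hs => eventually_gt_nhds (by linarith [(hCsub hs).2])
  obtain ⟨c, ⟨hpc, hCc⟩, hc0 : c < 0⟩ := (hev.and self_mem_nhdsWithin).exists
  refine ⟨c, fun s hs => ⟨hc0.trans_le (hCsub hs).1, by linarith [hCc s hs]⟩, fun x hx => ?_⟩
  rcases lt_or_ge x 0 with hx0 | hx0
  · rw [← hP x, hC (x + p) ⟨by linarith [hx.1], by linarith⟩]
    exact iff_of_false (fun h => by linarith [hCc _ h, hx.1]) fun h => by linarith [(hCsub h).1]
  · exact hC x ⟨hx0, by linarith [hx.2]⟩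

theorem sub_eq_sum_jumps {φ : ℝ → ℤ} (jump : ℝ → ℤ) {T : Finset ℝ} {a b : ℝ} (hab : a ≤ b)
    (hT : ↑T ⊆ Ioo a b) (hcont : ∀ x ∈ Icc a b, x ∉ T → ContinuousAt φ x)
    (hjump : ∀ t ∈ T, ∃ m : ℤ, (∀ᶠ s in 𝓝[<] t, φ s = m) ∧ ∀ᶠ s in 𝓝[>] t, φ s = m + jump t) :
    φ b - φ a = ∑ t ∈ T, jump t := by
  induction T using Finset.induction_on_max generalizing b with
  | empty =>
    rw [Finset.sum_empty, sub_eq_zero]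
    exact isPreconnected_Icc.constant
      (fun x hx => (hcont x hx (Finset.notMem_empty x)).continuousWithinAt)
      (right_mem_Icc.2 hab) (left_mem_Icc.2 hab)
  | insert t T hTt ih =>
    have ht : t ∈ Ioo a b := hT (Finset.mem_insert_self t T)
    obtain ⟨m, hleft, hright⟩ := hjump t (Finset.mem_insert_self t T)
    have hbefore : ∀ᶠ v in 𝓝[<] t, a < v ∧ ∀ s ∈ T, s < v :=
      nhdsWithin_le_nhds <| (eventually_gt_nhds ht.1).and <|
        (Finset.eventually_all T).2 fun s hs => eventually_gt_nhds (hTt s hs)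
    obtain ⟨v, hvm, ⟨hav, hTv⟩, hvt⟩ := (hleft.and (hbefore.and self_mem_nhdsWithin)).exists
    obtain ⟨u, hum, htu, hub⟩ := (hright.and (Ioo_mem_nhdsGT ht.2)).exists
    have hcont' : ∀ x ∈ Icc a b, x ≠ t → x ∉ T → ContinuousAt φ x := fun x hx hxt hxT =>
      hcont x hx (by rw [Finset.mem_insert, not_or]; exact ⟨hxt, hxT⟩)
    have hφv : φ v - φ a = ∑ s ∈ T, jump s :=
      ih hav.le (fun s hs => ⟨(hT (Finset.mem_insert_of_mem hs)).1, hTv s hs⟩)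
        (fun x hx => hcont' x ⟨hx.1, hx.2.trans (hvt.trans ht.2).le⟩ (hx.2.trans_lt hvt).ne)
        (fun s hs => hjump s (Finset.mem_insert_of_mem hs))
    have hφu : φ b = φ u := by
      refine isPreconnected_Icc.constant (fun x hx => ContinuousAt.continuousWithinAt ?_)
        (right_mem_Icc.2 hub.le) (left_mem_Icc.2 hub.le)
      have htx : t < x := htu.trans_le hx.1
      exact hcont' x ⟨ht.1.trans htx |>.le, hx.2⟩ htx.ne' fun hxT => (hTt x hxT).not_gt htx
    rw [Finset.sum_insert fun h => (hTt t h).false]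
    omega

theorem Continuous.sub_eq_of_periodic_cos_sin {θ : ℝ → ℝ} (hθ : Continuous θ) {p : ℝ}
    (hper : Periodic (fun s => (cos (θ s), sin (θ s))) p) (s : ℝ) :
    θ (s + p) - θ s = θ p - θ 0 := by
  have hk : ∀ s, ∃ k : ℤ, θ (s + p) - θ s = 2 * π * k := fun s =>
    Real.Angle.angle_eq_iff_two_pi_dvd_sub.1 <|
      Real.Angle.cos_sin_inj (congrArg Prod.fst (hper s)) (congrArg Prod.snd (hper s))
  choose k hk using hk
  have hkc : Continuous k := by
    rw [Int.isClosedEmbedding_coe_real.isEmbedding.continuous_iff]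
    have : (Int.cast ∘ k : ℝ → ℝ) = fun s => (θ (s + p) - θ s) / (2 * π) := by
      ext s
      rw [comp_apply, hk]
      field_simp
    rw [this]
    fun_prop
  have hks : k s = k 0 := PreconnectedSpace.constant inferInstance hkc
  rw [hk, hks, ← hk, zero_add]

theorem periodic_cos_sin_of_eq_norm_smul {v : ℝ → ℝ × ℝ} {θ : ℝ → ℝ} {p : ℝ} (hv : Periodic v p)
    (hv0 : ∀ s, v s ≠ 0) (hθ : ∀ s, v s = ‖v s‖ • (cos (θ s), sin (θ s))) :
    Periodic (fun s => (cos (θ s), sin (θ s))) p := fun s =>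
  smul_right_injective _ (norm_ne_zero_iff.2 (hv0 s)) <| by
    change ‖v s‖ • _ = ‖v s‖ • _
    rw [← hθ s, ← hv s]
    exact (hθ _).symm

theorem snd_eq_zero_and_fst_neg_iff {v : ℝ × ℝ} {a : ℝ} (hv : v = ‖v‖ • (cos a, sin a))
    (hv0 : v ≠ 0) : v.2 = 0 ∧ v.1 < 0 ↔ cos a = -1 := by
  have hr : 0 < ‖v‖ := norm_pos_iff.2 hv0
  have h₁ : v.1 = ‖v‖ * cos a := congrArg Prod.fst hv
  have h₂ : v.2 = ‖v‖ * sin a := congrArg Prod.snd hv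
  rw [h₁, h₂, mul_eq_zero, or_iff_right hr.ne', mul_neg_iff, or_iff_left fun h => lt_asymm hr h.1]
  constructor
  · rintro ⟨hs, -, hc⟩
    nlinarith [sin_sq_add_cos_sq a]
  · intro hc
    exact ⟨by nlinarith [sin_sq_add_cos_sq a], hr, by linarith⟩

theorem sign_snd_eq_sign_sin {v : ℝ × ℝ} {a : ℝ} (hv : v = ‖v‖ • (cos a, sin a)) (hv0 : v ≠ 0) :
    SignType.sign v.2 = SignType.sign (sin a) := by
  rw [show v.2 = ‖v‖ * sin a from congrArg Prod.snd hv, sign_mul,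
    _root_.sign_pos (norm_pos_iff.2 hv0), one_mul]

theorem sin_eq_neg_sin_sub_of_cos_eq_neg_one {a : ℝ} (ha : cos a = -1) (b : ℝ) :
    sin b = -sin (b - a) := by
  have hsin : sin a = 0 := by nlinarith [sin_sq_add_cos_sq a]
  rw [sin_sub, ha, hsin]
  ring

def oddPiIndex (u : ℝ) : ℤ := ⌊(u + π) / (2 * π)⌋

theorem oddPiIndex_eq_iff {u : ℝ} {k : ℤ} :
    oddPiIndex u = k ↔ (2 * k - 1) * π ≤ u ∧ u < (2 * k + 1) * π := by
  rw [oddPiIndex, Int.floor_eq_iff, le_div_iff₀ two_pi_pos, div_lt_iff₀ two_pi_pos]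
  constructor <;> rintro ⟨h₁, h₂⟩ <;> constructor <;> linarith

theorem oddPiIndex_add_two_pi_mul (u : ℝ) (n : ℤ) :
    oddPiIndex (u + 2 * π * n) = oddPiIndex u + n := by
  have : (u + 2 * π * n + π) / (2 * π) = (u + π) / (2 * π) + n := by
    field_simp
    ring
  rw [oddPiIndex, oddPiIndex, this, Int.floor_add_intCast]

theorem oddPiIndex_pi_add_int_mul (k : ℤ) : oddPiIndex (π + k * (2 * π)) = k + 1 :=
  oddPiIndex_eq_iff.2 ⟨by push_cast; linarith, by push_cast; linarith [pi_pos]⟩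

theorem continuousAt_oddPiIndex {u : ℝ} (hu : cos u ≠ -1) : ContinuousAt oddPiIndex u := by
  obtain ⟨hlo, hhi⟩ := oddPiIndex_eq_iff.1 (rfl : oddPiIndex u = _)
  have hlo' : (2 * oddPiIndex u - 1) * π < u := by
    refine hlo.lt_of_ne fun h => hu (Real.cos_eq_neg_one_iff.2 ⟨oddPiIndex u - 1, ?_⟩)
    push_cast; linarith
  rw [ContinuousAt, nhds_discrete ℤ, tendsto_pure]
  filter_upwards [Ioo_mem_nhds hlo' hhi] with v hv
  exact oddPiIndex_eq_iff.2 ⟨hv.1.le, hv.2⟩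

theorem oddPiIndex_of_sin_pos {a b : ℝ} (ha : cos a = -1) (hb : |b - a| < π) (h : 0 < sin b) :
    oddPiIndex b = oddPiIndex a - 1 := by
  obtain ⟨hlo, hhi⟩ := abs_lt.1 hb
  have hba : b < a := by
    by_contra! hab
    have := sin_nonneg_of_nonneg_of_le_pi (sub_nonneg.2 hab) hhi.le
    linarith [sin_eq_neg_sin_sub_of_cos_eq_neg_one ha b]
  obtain ⟨k, rfl⟩ := Real.cos_eq_neg_one_iff.1 ha
  rw [oddPiIndex_pi_add_int_mul, add_sub_cancel_right]
  exact oddPiIndex_eq_iff.2 ⟨by linarith, by linarith⟩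

theorem oddPiIndex_of_sin_neg {a b : ℝ} (ha : cos a = -1) (hb : |b - a| < π) (h : sin b < 0) :
    oddPiIndex b = oddPiIndex a := by
  obtain ⟨hlo, hhi⟩ := abs_lt.1 hb
  have hab : a < b := by
    by_contra! hba
    have := sin_nonpos_of_nonpos_of_neg_pi_le (sub_nonpos.2 hba) hlo.le
    linarith [sin_eq_neg_sin_sub_of_cos_eq_neg_one ha b]
  obtain ⟨k, rfl⟩ := Real.cos_eq_neg_one_iff.1 ha
  rw [oddPiIndex_pi_add_int_mul]
  exact oddPiIndex_eq_iff.2 ⟨by push_cast; linarith, by push_cast; linarith⟩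

theorem oddPiIndex_comp_jump {θ Y' : ℝ → ℝ} {t : ℝ} (hθ : ContinuousAt θ t)
    (hY : ∀ s, SignType.sign (Y' s) = SignType.sign (sin (θ s))) (ht : cos (θ t) = -1)
    (hd : deriv Y' t ≠ 0) :
    ∃ m : ℤ, (∀ᶠ s in 𝓝[<] t, oddPiIndex (θ s) = m) ∧
      ∀ᶠ s in 𝓝[>] t, oddPiIndex (θ s) = m + if 0 < deriv Y' t then -1 else 1 := by
  have hY't : Y' t = 0 := by
    rw [← _root_.sign_eq_zero_iff, hY, _root_.sign_eq_zero_iff,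
      sin_eq_neg_sin_sub_of_cos_eq_neg_one ht, sub_self, sin_zero, neg_zero]
  have hnear : ∀ᶠ s in 𝓝 t, |θ s - θ t| < π :=
    hθ.eventually (Metric.ball_mem_nhds _ pi_pos) |>.mono fun s hs => hs
  have hpos : ∀ᶠ s in 𝓝 t,
      SignType.sign (sin (θ s)) = 1 → oddPiIndex (θ s) = oddPiIndex (θ t) - 1 :=
    hnear.mono fun s hs h => oddPiIndex_of_sin_pos ht hs (sign_eq_one_iff.1 h)
  have hneg : ∀ᶠ s in 𝓝 t,
      SignType.sign (sin (θ s)) = -1 → oddPiIndex (θ s) = oddPiIndex (θ t) :=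
    hnear.mono fun s hs h => oddPiIndex_of_sin_neg ht hs (sign_eq_neg_one_iff.1 h)
  rcases hd.lt_or_gt with hd | hd
  · have hsign := eventually_nhdsWithin_sign_eq_of_deriv_neg hd hY't
    refine ⟨oddPiIndex (θ t) - 1, ?_, ?_⟩
    · filter_upwards [nhdsWithin_le_nhds (hsign.and hpos), self_mem_nhdsWithin]
        with s ⟨hs, hs'⟩ (hst : s < t)
      exact hs' (by rw [← hY, hs, sign_pos (sub_pos.2 hst)])
    · filter_upwards [nhdsWithin_le_nhds (hsign.and hneg), self_mem_nhdsWithin]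
        with s ⟨hs, hs'⟩ (hst : t < s)
      rw [if_neg hd.not_gt, hs' (by rw [← hY, hs, sign_neg (sub_neg.2 hst)])]
      ring
  · have hsign := eventually_nhdsWithin_sign_eq_of_deriv_pos hd hY't
    refine ⟨oddPiIndex (θ t), ?_, ?_⟩
    · filter_upwards [nhdsWithin_le_nhds (hsign.and hneg), self_mem_nhdsWithin]
        with s ⟨hs, hs'⟩ (hst : s < t)
      exact hs' (by rw [← hY, hs, sign_neg (sub_neg.2 hst)])
    · filter_upwards [nhdsWithin_le_nhds (hsign.and hpos), self_mem_nhdsWithin]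
        with s ⟨hs, hs'⟩ (hst : t < s)
      rw [if_pos hd, hs' (by rw [← hY, hs, sign_pos (sub_pos.2 hst)])]
      ring

theorem oddPiIndex_sub_eq_sum_jumps {θ Y' : ℝ → ℝ} (hθ : Continuous θ)
    (hY : ∀ s, SignType.sign (Y' s) = SignType.sign (sin (θ s))) {T : Finset ℝ} {a b : ℝ}
    (hab : a ≤ b) (hT : ↑T ⊆ Ioo a b) (hcross : ∀ x ∈ Icc a b, cos (θ x) = -1 ↔ x ∈ T)
    (hnd : ∀ t ∈ T, deriv Y' t ≠ 0) :
    oddPiIndex (θ b) - oddPiIndex (θ a) = ∑ t ∈ T, if 0 < deriv Y' t then -1 else 1 :=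
  sub_eq_sum_jumps (φ := fun s => oddPiIndex (θ s)) _ hab hT
    (fun x hx hxT => (continuousAt_oddPiIndex (mt (hcross x hx).1 hxT)).comp hθ.continuousAt)
    (fun t ht => oddPiIndex_comp_jump hθ.continuousAt hY
      ((hcross t (Ioo_subset_Icc_self (hT ht))).2 ht) (hnd t ht))

theorem IsRegularClosedLegendrian.deriv_xy_ne_zero {γ : ℝ → ℝ × ℝ × ℝ}
    (h : IsRegularClosedLegendrian γ) (s : ℝ) :
    (deriv (curveX γ) s, deriv (curveY γ) s) ≠ 0 := by
  obtain ⟨hC1, -, hne, hleg⟩ := h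
  have hd := (hC1.differentiable one_ne_zero s).hasDerivAt
  have hx : HasDerivAt (curveX γ) (deriv γ s).1 s := hd.fst
  have hy : HasDerivAt (curveY γ) (deriv γ s).2.1 s := hd.snd.fst
  have hz : HasDerivAt (curveZ γ) (deriv γ s).2.2 s := hd.snd.snd
  intro h0
  obtain ⟨hx0 : deriv (curveX γ) s = 0, hy0 : deriv (curveY γ) s = 0⟩ := Prod.ext_iff.1 h0
  have hz0 : deriv (curveZ γ) s = 0 := by linarith [hleg s, hy0 ▸ mul_zero (curveX γ s)]
  exact hne s (Prod.ext (hx.deriv ▸ hx0) (Prod.ext (hy.deriv ▸ hy0) (hz.deriv ▸ hz0)))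

theorem rot_eq_rightDown_sub_leftUp_general (γ : ℝ → ℝ × ℝ × ℝ)
    (hreg : IsRegularClosedLegendrian γ)
    (S : Finset ℝ) (hSsub : ↑S ⊆ Set.Ico (0:ℝ) (2 * π))
    (hS : ∀ s ∈ Set.Ico (0:ℝ) (2 * π), (deriv (curveY γ) s = 0 ↔ s ∈ S))
    (hnd : ∀ s ∈ S, deriv (deriv (curveY γ)) s ≠ 0)
    (n : ℤ) (hn : HasLegendrianRotationNumber γ n) :
    n = ∑ s ∈ S.filter (fun s => deriv (curveX γ) s < 0),
          (if 0 < deriv (deriv (curveY γ)) s then (-1 : ℤ) else 1) := by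
  obtain ⟨θ, hθ, hvel, hrot⟩ := hn
  have hv0 := hreg.deriv_xy_ne_zero
  have hxper : Periodic (curveX γ) (2 * π) := fun s => congrArg (·.1) (hreg.2.1 s)
  have hyper : Periodic (curveY γ) (2 * π) := fun s => congrArg (·.2.1) (hreg.2.1 s)
  have hvper : Periodic (fun s => (deriv (curveX γ) s, deriv (curveY γ) s)) (2 * π) :=
    fun s => Prod.ext (hxper.deriv s) (hyper.deriv s)
  have hcs := periodic_cos_sin_of_eq_norm_smul hvper hv0 hvel
  have hshift (s : ℝ) : θ (s + 2 * π) = θ s + 2 * π * n := by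
    linarith [hθ.sub_eq_of_periodic_cos_sin hcs s]
  obtain ⟨c, hCc, hc⟩ := exists_Icc_mem_iff_of_periodic (P := fun s => cos (θ s) = -1)
    (C := S.filter fun s => deriv (curveX γ) s < 0) two_pi_pos
    (fun s => congrArg (· = -1) (congrArg Prod.fst (hcs s)))
    (fun s hs => hSsub (Finset.mem_filter.1 hs).1) fun s hs => by
      rw [← snd_eq_zero_and_fst_neg_iff (hvel s) (hv0 s), Finset.mem_filter, hS s hs]
  have hcount := oddPiIndex_sub_eq_sum_jumps (Y' := deriv (curveY γ)) hθ
    (fun s => sign_snd_eq_sign_sin (hvel s) (hv0 s)) (by linarith [pi_pos]) hCc hc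
    fun t ht => hnd t (Finset.mem_filter.1 ht).1
  rwa [hshift, oddPiIndex_add_two_pi_mul, add_sub_cancel_left] at hcount

/-- **Cusp formula (second form):** `rot γ = ρ₋ - λ₊`, i.e. the rotation number
is the signed count, over the zeros `s` of `y'` in `[0, 2π)` with `x'(s) < 0`,
of `-sign (y''(s))`. -/
theorem rot_eq_rightDown_sub_leftUp (γ : ℝ → ℝ × ℝ × ℝ)
    (hsm : ContDiff ℝ 2 γ) (hreg : IsRegularClosedLegendrian γ)
    (S : Finset ℝ) (hSsub : ↑S ⊆ Set.Ico (0:ℝ) (2 * π))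
    (hS : ∀ s ∈ Set.Ico (0:ℝ) (2 * π), (deriv (curveY γ) s = 0 ↔ s ∈ S))
    (hnd : ∀ s ∈ S, deriv (deriv (curveY γ)) s ≠ 0)
    (n : ℤ) (hn : HasLegendrianRotationNumber γ n) :
    n = ∑ s ∈ S.filter (fun s => deriv (curveX γ) s < 0),
          (if 0 < deriv (deriv (curveY γ)) s then (-1 : ℤ) else 1) :=
  rot_eq_rightDown_sub_leftUp_general γ hreg S hSsub hS hnd n hn
end
end
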